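/- arXiv:2505.15720 — 3 statements merged into one kernel-verified Lean document; each statement's English description precedes it below -/
import Mathlib

section
/- Let F be a finite field with q = |F| elements and K a finite field extension of F. Let ζ ∈ K with ζ ≠ 0, and let P ∈ K[X] be a linearized polynomial. Then the remainder of the right division of P by X^q − ζ^{q−1}·X equals (ζ^{−1}·P(ζ))·X; that is, there exists a linearized polynomial Q ∈ K[X] such that P = Q ∘ (X^q − ζ^{q−1}·X) + (ζ^{−1}·P(ζ))·X. -/
open Polynomial

/-- A polynomial over `K` is linearized (a `q`-polynomial) if every exponent in
its support is a power of `q`. -/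
def IsLinearized (q : ℕ) {K : Type*} [Semiring K] (p : K[X]) : Prop :=
  ∀ n ∈ p.support, ∃ i : ℕ, n = q ^ i

lemma IsLinearized.add' {q : ℕ} {K : Type*} [Semiring K] {p r : K[X]}
    (hp : IsLinearized q p) (hr : IsLinearized q r) : IsLinearized q (p + r) := by
  intro n hn
  rcases Finset.mem_union.mp (Polynomial.support_add hn) with h | h
  exacts [hp n h, hr n h]

lemma IsLinearized.C_mul' {q : ℕ} {K : Type*} [CommSemiring K] (a : K) {p : K[X]}
    (hp : IsLinearized q p) : IsLinearized q (C a * p) := by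
  intro n hn
  refine hp n ?_
  have := Polynomial.support_smul a p
  rw [smul_eq_C_mul] at this
  exact this hn

lemma IsLinearized.X_pow' {q : ℕ} {K : Type*} [Semiring K] (i : ℕ) :
    IsLinearized q ((X : K[X]) ^ q ^ i) := by
  intro n hn
  rw [Polynomial.mem_support_iff, Polynomial.coeff_X_pow] at hn
  exact ⟨i, by by_contra h; simp [h] at hn⟩

/-- The right remainder of a linearized polynomial `P` by `X^q - ζ^(q-1)·X` is
`(ζ⁻¹ · P(ζ)) · X`. -/
theorem right_remainder_by_annihilator (F K : Type*) [Field F] [Fintype F]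
    [Field K] [Fintype K] [Algebra F K]
    (q : ℕ) (hq : q = Fintype.card F)
    (ζ : K) (hζ : ζ ≠ 0) (P : K[X]) (hP : IsLinearized q P) :
    ∃ Q : K[X], IsLinearized q Q ∧
      P = Q.comp (X ^ q - C (ζ ^ (q - 1)) * X) + C (ζ⁻¹ * P.eval ζ) * X := by
  classical
  set B : K[X] := X ^ q - C (ζ ^ (q - 1)) * X with hB
  -- characteristic facts
  obtain ⟨p, hcp⟩ := CharP.exists F
  haveI : CharP F p := hcp
  obtain ⟨m, hpprime, hcard⟩ := FiniteField.card F p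
  haveI : Fact p.Prime := ⟨hpprime⟩
  haveI : CharP K p := charP_of_injective_algebraMap (algebraMap F K).injective p
  haveI : CharP K[X] p := inferInstance
  have hq' : q = p ^ (m : ℕ) := by rw [hq, hcard]
  have hq1 : 1 ≤ q := by
    rw [hq]; exact Fintype.card_pos
  have hqi1 : ∀ i : ℕ, 1 ≤ q ^ i := fun i => Nat.one_le_pow _ _ hq1
  -- the monomial case
  have mono : ∀ i : ℕ, ∃ Q : K[X], IsLinearized q Q ∧
      (X : K[X]) ^ q ^ i = Q.comp B + C (ζ ^ (q ^ i - 1)) * X := by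
    intro i
    induction i with
    | zero =>
      exact ⟨0, by simp [IsLinearized], by simp⟩
    | succ i ih =>
      obtain ⟨Q, hQlin, hQ⟩ := ih
      refine ⟨X ^ q ^ i + C (ζ ^ ((q - 1) * q ^ i)) * Q,
        (IsLinearized.X_pow' i).add' ((hQlin.C_mul' _)), ?_⟩
      have hXq : (X : K[X]) ^ q = B + C (ζ ^ (q - 1)) * X := by
        rw [hB]; ring
      have frob : (X : K[X]) ^ q ^ (i + 1) = B ^ q ^ i + C (ζ ^ ((q - 1) * q ^ i)) * X ^ q ^ i := by
        have : (X : K[X]) ^ q ^ (i + 1) = ((X : K[X]) ^ q) ^ q ^ i := by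
          rw [← pow_mul, pow_succ, mul_comm]
        rw [this, hXq, hq', ← pow_mul, add_pow_char_pow (p := p),
          mul_pow, ← C_pow, pow_mul ζ]
      have hBpow : (B : K[X]) ^ q ^ i = ((X : K[X]) ^ q ^ i).comp B := by
        rw [X_pow_comp]
      have hexp : (q - 1) * q ^ i + (q ^ i - 1) = q ^ (i + 1) - 1 := by
        have h1 := hqi1 i
        have h2 : q ^ (i + 1) = q * q ^ i := by rw [pow_succ]; ring
        have h3 : q ^ i ≤ q * q ^ i := Nat.le_mul_of_pos_left _ hq1
        rw [Nat.sub_mul, one_mul, h2]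
        omega
      calc (X : K[X]) ^ q ^ (i + 1)
          = ((X : K[X]) ^ q ^ i).comp B + C (ζ ^ ((q - 1) * q ^ i)) * X ^ q ^ i := by
            rw [frob, hBpow]
        _ = ((X : K[X]) ^ q ^ i).comp B
              + C (ζ ^ ((q - 1) * q ^ i)) * (Q.comp B + C (ζ ^ (q ^ i - 1)) * X) := by rw [← hQ]
        _ = (X ^ q ^ i + C (ζ ^ ((q - 1) * q ^ i)) * Q).comp B
              + C (ζ ^ (q ^ (i + 1) - 1)) * X := by
            rw [add_comp, mul_comp, C_comp, ← hexp, pow_add, C_mul]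
            ring_nf
      rfl
  -- general case by induction on the support
  suffices H : ∀ s : Finset ℕ, ∀ P : K[X], P.support ⊆ s → IsLinearized q P →
      ∃ Q : K[X], IsLinearized q Q ∧
        P = Q.comp B + C (ζ⁻¹ * P.eval ζ) * X by
    exact H P.support P subset_rfl hP
  intro s
  induction s using Finset.induction_on with
  | empty =>
    intro P hsub _
    have : P = 0 := Polynomial.support_eq_empty.mp (Finset.subset_empty.mp hsub)
    subst this
    exact ⟨0, by simp [IsLinearized], by simp⟩
  | @insert a s ha ih =>
    intro P hsub hPlin
    by_cases hca : P.coeff a = 0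
    · refine ih P ?_ hPlin
      intro n hn
      rcases Finset.mem_insert.mp (hsub hn) with h | h
      · exact absurd (h ▸ hn) (by simp [Polynomial.mem_support_iff, hca])
      · exact h
    · have hamem : a ∈ P.support := Polynomial.mem_support_iff.mpr hca
      obtain ⟨i, hi⟩ := hPlin a hamem
      set c := P.coeff a with hc
      set P' := P.erase a with hP'
      have hsplit : P = C c * X ^ a + P' := by
        conv_lhs => rw [← Polynomial.monomial_add_erase P a]
        rw [Polynomial.C_mul_X_pow_eq_monomial]
      have hP'lin : IsLinearized q P' := by
        intro n hn
        rw [hP', Polynomial.support_erase] at hn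
        exact hPlin n (Finset.erase_subset _ _ hn)
      have hP'sub : P'.support ⊆ s := by
        intro n hn
        rw [hP', Polynomial.support_erase] at hn
        rcases Finset.mem_insert.mp (hsub (Finset.erase_subset _ _ hn)) with h | h
        · exact absurd h (Finset.ne_of_mem_erase hn)
        · exact h
      obtain ⟨Q', hQ'lin, hQ'⟩ := ih P' hP'sub hP'lin
      obtain ⟨Qi, hQilin, hQi⟩ := mono i
      refine ⟨C c * Qi + Q', (hQilin.C_mul' c).add' hQ'lin, ?_⟩
      have heval : P.eval ζ = c * ζ ^ q ^ i + P'.eval ζ := by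
        rw [hsplit]; simp [hi]
      have hz : ζ⁻¹ * (c * ζ ^ q ^ i) = c * ζ ^ (q ^ i - 1) := by
        have : ζ ^ q ^ i = ζ * ζ ^ (q ^ i - 1) := by
          rw [← pow_succ']
          congr 1
          have := hqi1 i
          omega
        rw [this]
        field_simp
      calc P = C c * X ^ a + P' := hsplit
        _ = C c * (Qi.comp B + C (ζ ^ (q ^ i - 1)) * X)
              + (Q'.comp B + C (ζ⁻¹ * P'.eval ζ) * X) := by rw [← hQi, ← hi, ← hQ']
        _ = (C c * Qi + Q').comp B + C (ζ⁻¹ * P.eval ζ) * X := by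
            rw [add_comp, mul_comp, C_comp, heval, mul_add ζ⁻¹, hz]
            simp only [C_add, C_mul]
            ring
end

section
/- Let F be a finite field with q = |F| elements and K a finite field extension of F. Let f₁, f₂, S₁, S₂, g ∈ K[X] be linearized polynomials with f₁, f₂ nonzero, satisfying the Bézout relation S₁ ∘ f₁ + S₂ ∘ f₂ = X. Let r₁ and r₂ be the right remainders of g under right division by f₁ and f₂ respectively (i.e., there exist linearized Q_i with g = Q_i ∘ f_i + r_i and deg r_i < deg f_i). Then both f₁ and f₂ right-divide the linearized polynomial g − r₂ ∘ S₁ ∘ f₁ − r₁ ∘ S₂ ∘ f₂. -/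
open Polynomial

/-- `B` right-divides `A` (among linearized polynomials): `A = Q ∘ B` for some
linearized `Q`. -/
def LinRightDvd (q : ℕ) {K : Type*} [CommSemiring K] (B A : K[X]) : Prop :=
  ∃ Q : K[X], IsLinearized q Q ∧ A = Q.comp B

section Aux

variable {K : Type*} [Field K] {q : ℕ}

lemma IsLinearized.add {a b : K[X]} (ha : IsLinearized q a) (hb : IsLinearized q b) :
    IsLinearized q (a + b) := fun n hn => by
  rcases Finset.mem_union.mp (Polynomial.support_add hn) with h | h
  · exact ha n h
  · exact hb n h

lemma IsLinearized.neg {a : K[X]} (ha : IsLinearized q a) : IsLinearized q (-a) := fun n hn => by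
  rw [Polynomial.support_neg] at hn; exact ha n hn

lemma IsLinearized.sub {a b : K[X]} (ha : IsLinearized q a) (hb : IsLinearized q b) :
    IsLinearized q (a - b) := by
  rw [sub_eq_add_neg]; exact ha.add hb.neg

lemma isLinearized_zero : IsLinearized q (0 : K[X]) := fun n hn => by simp at hn

lemma isLinearized_C_mul_X_pow (c : K) (i : ℕ) :
    IsLinearized q (Polynomial.C c * X ^ (q ^ i)) := fun n hn => by
  have := Polynomial.support_C_mul_X_pow' (q ^ i) c hn
  exact ⟨i, Finset.mem_singleton.mp this⟩

lemma isLinearized_sum {ι : Type*} (s : Finset ι) (f : ι → K[X])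
    (h : ∀ i ∈ s, IsLinearized q (f i)) : IsLinearized q (∑ i ∈ s, f i) := by
  classical
  induction s using Finset.induction_on with
  | empty => simpa using isLinearized_zero
  | insert _ _ hx ih =>
    rw [Finset.sum_insert hx]
    exact (h _ (Finset.mem_insert_self _ _)).add
      (ih fun i hi => h i (Finset.mem_insert_of_mem hi))

variable (hfrob : ∀ (A B : K[X]) (i : ℕ), (A + B) ^ q ^ i = A ^ q ^ i + B ^ q ^ i)

include hfrob in
lemma pow_q_pow_linearized {B : K[X]} (hB : IsLinearized q B) (i : ℕ) :
    IsLinearized q (B ^ q ^ i) := by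
  classical
  have key : ∀ (s : Finset ℕ), (∀ n ∈ s, ∃ j, n = q ^ j) →
      IsLinearized q ((∑ n ∈ s, Polynomial.monomial n (B.coeff n)) ^ q ^ i) := by
    intro s hs
    induction s using Finset.induction_on with
    | empty =>
      rw [Finset.sum_empty]
      rcases eq_or_ne (q ^ i) 0 with h | h
      · obtain ⟨hqz, -⟩ := Nat.pow_eq_zero.mp h
        rw [h, pow_zero]
        intro n hn
        rw [Polynomial.mem_support_iff, Polynomial.coeff_one] at hn
        simp only [ne_eq, ite_eq_right_iff, not_forall] at hn
        exact ⟨1, by simp [hqz, hn.1.symm]⟩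
      · rw [zero_pow h]
        exact isLinearized_zero
    | @insert a t hx ih =>
      rw [Finset.sum_insert hx, hfrob]
      refine IsLinearized.add ?_ (ih fun n hn => hs n (Finset.mem_insert_of_mem hn))
      obtain ⟨j, rfl⟩ := hs a (Finset.mem_insert_self _ _)
      rw [Polynomial.monomial_pow]
      intro n hn
      have := Polynomial.support_monomial' _ _ hn
      rw [Finset.mem_singleton] at this
      exact ⟨j + i, by rw [this, pow_add, mul_comm]⟩
  have := key B.support (fun n hn => hB n hn)
  rwa [← B.as_sum_support] at this

include hfrob in
lemma IsLinearized.comp {P B : K[X]} (hP : IsLinearized q P) (hB : IsLinearized q B) :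
    IsLinearized q (P.comp B) := by
  classical
  rw [Polynomial.comp, Polynomial.eval₂_eq_sum, Polynomial.sum]
  refine isLinearized_sum _ _ fun n hn => ?_
  obtain ⟨i, rfl⟩ := hP n hn
  intro m hm
  have hsub : m ∈ (B ^ q ^ i).support := by
    have : (Polynomial.C (P.coeff (q ^ i)) * B ^ q ^ i).support ⊆ (B ^ q ^ i).support := by
      simpa [Polynomial.smul_eq_C_mul] using Polynomial.support_smul (P.coeff (q ^ i)) (B ^ q ^ i)
    exact this hm
  exact pow_q_pow_linearized hfrob hB i m hsub

include hfrob in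
lemma comp_add_linearized {P : K[X]} (hP : IsLinearized q P) (A B : K[X]) :
    P.comp (A + B) = P.comp A + P.comp B := by
  classical
  rw [Polynomial.comp, Polynomial.comp, Polynomial.comp,
    Polynomial.eval₂_eq_sum, Polynomial.eval₂_eq_sum, Polynomial.eval₂_eq_sum,
    Polynomial.sum, Polynomial.sum, Polynomial.sum, ← Finset.sum_add_distrib]
  refine Finset.sum_congr rfl fun n hn => ?_
  obtain ⟨i, rfl⟩ := hP n hn
  rw [hfrob, mul_add]

end Aux

/-- Key lemma for the linearized CRT with two moduli: `f₁` and `f₂` both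
right-divide `g - π₂(g) ∘ S₁ ∘ f₁ - π₁(g) ∘ S₂ ∘ f₂`. -/
theorem crt_two_moduli_lemma (F K : Type*) [Field F] [Fintype F]
    [Field K] [Fintype K] [Algebra F K]
    (q : ℕ) (hq : q = Fintype.card F)
    (f₁ f₂ S₁ S₂ g r₁ r₂ : K[X])
    (hf₁ : IsLinearized q f₁) (hf₂ : IsLinearized q f₂)
    (hS₁ : IsLinearized q S₁) (hS₂ : IsLinearized q S₂)
    (hg : IsLinearized q g) (hr₁ : IsLinearized q r₁) (hr₂ : IsLinearized q r₂)
    (hf₁0 : f₁ ≠ 0) (hf₂0 : f₂ ≠ 0)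
    (hBez : S₁.comp f₁ + S₂.comp f₂ = X)
    (hrem₁ : (∃ Q : K[X], IsLinearized q Q ∧ g = Q.comp f₁ + r₁) ∧
      r₁.degree < f₁.degree)
    (hrem₂ : (∃ Q : K[X], IsLinearized q Q ∧ g = Q.comp f₂ + r₂) ∧
      r₂.degree < f₂.degree) :
    LinRightDvd q f₁ (g - r₂.comp (S₁.comp f₁) - r₁.comp (S₂.comp f₂)) ∧
    LinRightDvd q f₂ (g - r₂.comp (S₁.comp f₁) - r₁.comp (S₂.comp f₂)) := by
  classical
  -- Frobenius additivity for `q`-th power maps on `K[X]`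
  set p := ringChar F with hp
  obtain ⟨k, hpprime, hcard⟩ := FiniteField.card F p
  haveI : Fact p.Prime := ⟨hpprime⟩
  haveI : CharP K p := charP_of_injective_algebraMap (algebraMap F K).injective p
  have hfrob : ∀ (A B : K[X]) (i : ℕ), (A + B) ^ q ^ i = A ^ q ^ i + B ^ q ^ i := by
    intro A B i
    have hq' : q ^ i = p ^ ((k : ℕ) * i) := by
      rw [hq, hcard, ← pow_mul]
    rw [hq', add_pow_char_pow]
  obtain ⟨⟨Q₁, hQ₁lin, hQ₁⟩, _⟩ := hrem₁
  obtain ⟨⟨Q₂, hQ₂lin, hQ₂⟩, _⟩ := hrem₂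
  constructor
  · refine ⟨Q₁ + r₁.comp S₁ - r₂.comp S₁,
      ((hQ₁lin.add (hr₁.comp hfrob hS₁)).sub (hr₂.comp hfrob hS₁)), ?_⟩
    have hr₁split : r₁ = r₁.comp (S₁.comp f₁) + r₁.comp (S₂.comp f₂) := by
      rw [← comp_add_linearized hfrob hr₁, hBez, Polynomial.comp_X]
    rw [Polynomial.sub_comp, Polynomial.add_comp, Polynomial.comp_assoc,
      Polynomial.comp_assoc]
    linear_combination hQ₁ + hr₁split
  · refine ⟨Q₂ + r₂.comp S₂ - r₁.comp S₂,
      ((hQ₂lin.add (hr₂.comp hfrob hS₂)).sub (hr₁.comp hfrob hS₂)), ?_⟩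
    have hr₂split : r₂ = r₂.comp (S₁.comp f₁) + r₂.comp (S₂.comp f₂) := by
      rw [← comp_add_linearized hfrob hr₂, hBez, Polynomial.comp_X]
    rw [Polynomial.sub_comp, Polynomial.add_comp, Polynomial.comp_assoc,
      Polynomial.comp_assoc]
    linear_combination hQ₂ + hr₂split
end

section
/- Let F be a finite field with q = |F| elements and K a finite field extension of F. Let p₁, ..., p_s ∈ K[X] be linearized polynomials, and for each i let b_i, S_i ∈ K[X] be linearized polynomials all of whose coefficients lie in the image of F in K; let h ∈ K[X] be a nonzero linearized polynomial with all coefficients in the image of F. Let R be the right remainder of Σ_{i=1}^{s} p_i ∘ S_i ∘ b_i under right division by h. Then every coefficient of R lies in the F-span of the set of all coefficients of p₁, ..., p_s. (In particular, the support of the Chinese remainder lifting Φ(e) of an error e is contained in the support of e when the moduli have coefficients in F.) -/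
/-!
Write `A = Σ pᵢ ∘ Sᵢ ∘ bᵢ` and let `V` be the `F`-span of the coefficients of the `pᵢ`.
Polynomials with coefficients in `V` are stable under multiplication by, and composition
with, polynomials with coefficients in `F`, so `A` has coefficients in `V`. In
`A = Q ∘ h + R` the coefficient of `A` in degree `deg Q · deg h` is `lc Q · (lc h) ^ deg Q`,
with `lc h` a nonzero element of `F`, so `lc Q ∈ V`; peeling off the leading term of `Q`
and inducting leaves `R` with coefficients in `V`.
-/

open Polynomial

namespace Polynomial

section CoeffsIn

variable {R S : Type*} [CommSemiring R] [Semiring S]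

section Module

variable [Module R S] {M : Submodule R S}

variable (M) in
def coeffsIn : Submodule R S[X] where
  carrier := {p | ∀ n, p.coeff n ∈ M}
  add_mem' hp hq n := by simpa only [coeff_add] using add_mem (hp n) (hq n)
  zero_mem' n := by simp
  smul_mem' c p hp n := by simpa only [coeff_smul] using M.smul_mem c (hp n)

theorem mem_coeffsIn {p : S[X]} : p ∈ coeffsIn M ↔ ∀ n, p.coeff n ∈ M := Iff.rfl

theorem C_mem_coeffsIn {a : S} (ha : a ∈ M) : C a ∈ coeffsIn M := fun n => by
  rw [coeff_C]
  split_ifs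
  exacts [ha, M.zero_mem]

end Module

variable [Algebra R S] {M : Submodule R S}

theorem mul_mem_coeffsIn_of_mem_lifts {p q : S[X]} (hp : p ∈ coeffsIn M)
    (hq : q ∈ lifts (algebraMap R S)) : p * q ∈ coeffsIn M := fun n => by
  rw [coeff_mul]
  refine sum_mem fun x _ => ?_
  obtain ⟨c, hc⟩ := (lifts_iff_coeff_lifts q).1 hq x.2
  rw [← hc, ← Algebra.commutes, ← Algebra.smul_def]
  exact M.smul_mem c (hp x.1)

theorem comp_mem_coeffsIn {p q : S[X]} (hp : p ∈ coeffsIn M)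
    (hq : q ∈ lifts (algebraMap R S)) : p.comp q ∈ coeffsIn M := by
  rw [comp_eq_sum_left]
  exact sum_mem fun e _ =>
    mul_mem_coeffsIn_of_mem_lifts (C_mem_coeffsIn (hp e)) (pow_mem hq e)

end CoeffsIn

section Division

variable {R S : Type*} [Field R] [Ring S] [Algebra R S] {M : Submodule R S}
  {g r : S[X]}

theorem leadingCoeff_mem_of_comp_add_mem (hg : g ∈ lifts (algebraMap R S))
    (hg0 : g.natDegree ≠ 0) (hr : r.degree < g.degree) (hr0 : r.coeff 0 = 0) {Q : S[X]}
    (hQ : Q.comp g + r ∈ coeffsIn M) : Q.leadingCoeff ∈ M := by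
  have hr_top : r.coeff (Q.natDegree * g.natDegree) = 0 := by
    rcases Nat.eq_zero_or_pos Q.natDegree with hQ0 | hQ0
    · rwa [hQ0, zero_mul]
    refine coeff_eq_zero_of_degree_lt (hr.trans_le ?_)
    rw [degree_eq_natDegree (ne_zero_of_degree_gt hr)]
    exact_mod_cast Nat.le_mul_of_pos_left _ hQ0
  have htop := hQ (Q.natDegree * g.natDegree)
  rw [coeff_add, coeff_comp_degree_mul_degree hg0, hr_top, add_zero] at htop
  obtain ⟨c, hc⟩ : ∃ c, algebraMap R S c = g.leadingCoeff :=
    (lifts_iff_coeff_lifts g).1 hg g.natDegree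
  have hc0 : c ≠ 0 := by
    rintro rfl
    exact leadingCoeff_ne_zero.2 (ne_zero_of_degree_gt hr) (by rw [← hc, map_zero])
  rwa [← hc, ← map_pow, ← Algebra.commutes, ← Algebra.smul_def,
    Submodule.smul_mem_iff _ (pow_ne_zero _ hc0)] at htop

/-- Without `r.coeff 0 = 0` a constant could be shifted between `Q` and `r`. -/
theorem mem_coeffsIn_of_comp_add_mem (hg : g ∈ lifts (algebraMap R S))
    (hr : r.degree < g.degree) (hr0 : r.coeff 0 = 0) {Q : S[X]}
    (hQ : Q.comp g + r ∈ coeffsIn M) : r ∈ coeffsIn M := by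
  rcases eq_or_ne g.natDegree 0 with hg0 | hg0
  · have hr_deg : r.degree ≤ 0 := (hr.trans_le (degree_le_of_natDegree_le hg0.le)).le
    rw [eq_C_of_degree_le_zero hr_deg, hr0, C_0]
    exact zero_mem _
  induction hn : Q.support.card generalizing Q with
  | zero => rwa [card_support_eq_zero.1 hn, zero_comp, zero_add] at hQ
  | succ n ih =>
    have hlc := leadingCoeff_mem_of_comp_add_mem hg hg0 hr hr0 hQ
    have hsplit : Q.comp g = Q.eraseLead.comp g + C Q.leadingCoeff * g ^ Q.natDegree := by
      conv_lhs => rw [← Q.eraseLead_add_C_mul_X_pow]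
      rw [add_comp, C_mul_comp, X_pow_comp]
    have herase : Q.eraseLead.comp g + r = Q.comp g + r - C Q.leadingCoeff * g ^ Q.natDegree := by
      rw [hsplit]
      abel
    refine ih ?_ (card_support_eraseLead' hn)
    rw [herase]
    exact sub_mem hQ (mul_mem_coeffsIn_of_mem_lifts (C_mem_coeffsIn hlc) (pow_mem hg _))

end Division

end Polynomial

theorem IsLinearized.coeff_zero {q : ℕ} {K : Type*} [Semiring K] {p : K[X]}
    (hp : IsLinearized q p) (hq : q ≠ 0) : p.coeff 0 = 0 := by
  by_contra h0
  obtain ⟨i, hi⟩ := hp 0 (mem_support_iff.2 h0)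
  exact pow_ne_zero i hq hi.symm

theorem supp_crt_lifting_subset_general (F K : Type*) [Field F] [Fintype F]
    [Field K] [Algebra F K]
    (q : ℕ) (hq : q = Fintype.card F) (s : ℕ)
    (p b S : Fin s → K[X]) (h R : K[X])
    (hbF : ∀ i n, (b i).coeff n ∈ Set.range (algebraMap F K))
    (hSF : ∀ i n, (S i).coeff n ∈ Set.range (algebraMap F K))
    (hhF : ∀ n, h.coeff n ∈ Set.range (algebraMap F K))
    (hR : IsLinearized q R)
    (hrem : ∃ Q : K[X], IsLinearized q Q ∧
      ∑ i, (p i).comp ((S i).comp (b i)) = Q.comp h + R)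
    (hRdeg : R.degree < h.degree) :
    ∀ n, R.coeff n ∈
      Submodule.span F (⋃ i, Set.range (p i).coeff) := by
  set V := Submodule.span F (⋃ i, Set.range (p i).coeff)
  have hpV (i : Fin s) : p i ∈ coeffsIn V := fun n =>
    Submodule.subset_span (Set.mem_iUnion.2 ⟨i, n, rfl⟩)
  have hsum : ∑ i, (p i).comp ((S i).comp (b i)) ∈ coeffsIn V := sum_mem fun i _ => by
    rw [← comp_assoc]
    exact comp_mem_coeffsIn (comp_mem_coeffsIn (hpV i) ((lifts_iff_coeff_lifts _).2 (hSF i)))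
      ((lifts_iff_coeff_lifts _).2 (hbF i))
  obtain ⟨Q, -, hQ⟩ := hrem
  have hR0 : R.coeff 0 = 0 := hR.coeff_zero (hq ▸ Fintype.card_ne_zero)
  exact mem_coeffsIn.1 <|
    mem_coeffsIn_of_comp_add_mem ((lifts_iff_coeff_lifts h).2 hhF) hRdeg hR0 (hQ ▸ hsum)

/-- Support preservation of the Chinese remainder lifting when the moduli data
have coefficients in the base field `F`: the right remainder `R` of
`Σ_i p_i ∘ S_i ∘ b_i` by `h` has all coefficients in the `F`-span of the
coefficients of `p₁, ..., p_s`. -/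
theorem supp_crt_lifting_subset (F K : Type*) [Field F] [Fintype F]
    [Field K] [Fintype K] [Algebra F K]
    (q : ℕ) (hq : q = Fintype.card F) (s : ℕ)
    (p b S : Fin s → K[X]) (h R : K[X])
    (hp : ∀ i, IsLinearized q (p i))
    (hb : ∀ i, IsLinearized q (b i)) (hS : ∀ i, IsLinearized q (S i))
    (hbF : ∀ i n, (b i).coeff n ∈ Set.range (algebraMap F K))
    (hSF : ∀ i n, (S i).coeff n ∈ Set.range (algebraMap F K))
    (hh : IsLinearized q h) (hh0 : h ≠ 0)
    (hhF : ∀ n, h.coeff n ∈ Set.range (algebraMap F K))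
    (hR : IsLinearized q R)
    (hrem : ∃ Q : K[X], IsLinearized q Q ∧
      ∑ i, (p i).comp ((S i).comp (b i)) = Q.comp h + R)
    (hRdeg : R.degree < h.degree) :
    ∀ n, R.coeff n ∈
      Submodule.span F (⋃ i, Set.range (p i).coeff) :=
  supp_crt_lifting_subset_general F K q hq s p b S h R hbF hSF hhF hR hrem hRdeg
end
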